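/- (Bruss' Odds-Theorem) Let Z_1,…,Z_n be independent Bernoulli random variables with success probabilities p_t = P(Z_t = 1) < 1; set q_t = 1 − p_t and odds r_t = p_t/q_t. Define t* = max{1, max{k ∈ {1,…,n} : ∑_{j=k}^{n} r_j ≥ 1}} (with t* = 1 if the inner set is empty). Then the stopping time τ* = min({t ≥ t* : Z_t = 1} ∪ {n}) maximizes the probability of stopping at the last success, P(Z_τ = 1, Z_{τ+1} = ⋯ = Z_n = 0), over all stopping times τ of the filtration 𝒵_t = σ(Z_1,…,Z_t), and the maximal probability equals (∏_{j=t*}^{n} q_j) · (∑_{j=t*}^{n} r_j). -/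

import Mathlib

open MeasureTheory ProbabilityTheory Finset
open scoped ENNReal Classical

noncomputable section

/-- The σ-algebra on `Ω` generated by the functions `f 1, …, f t`. -/
def genFilt {Ω β : Type*} [MeasurableSpace β] (f : ℕ → Ω → β) (t : ℕ) :
    MeasurableSpace Ω :=
  ⨆ i ∈ Set.Icc 1 t, MeasurableSpace.comap (f i) inferInstance

/-- `τ` is a stopping time with values in `{1,…,n}` of the filtration generated by `f`. -/
def IsStopTime {Ω β : Type*} [MeasurableSpace β] (f : ℕ → Ω → β) (n : ℕ) (τ : Ω → ℕ) : Prop :=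
  (∀ ω, τ ω ∈ Set.Icc 1 n) ∧ ∀ t, MeasurableSet[genFilt f t] {ω | τ ω = t}

/-- The family `(f i)_{i ∈ s}` is independent under `μ`. -/
def IndepSeq {Ω β : Type*} [MeasurableSpace Ω] [MeasurableSpace β]
    (f : ℕ → Ω → β) (s : Set ℕ) (μ : Measure Ω) : Prop :=
  iIndepFun (m := fun _ : s => (inferInstance : MeasurableSpace β)) (fun i : s => f i.1) μ

/-- `N` is independent of the family `(f i)_{i ∈ s}`. -/
def IndepOfSeq {Ω β : Type*} [MeasurableSpace Ω] [MeasurableSpace β]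
    (N : Ω → ℕ) (f : ℕ → Ω → β) (s : Set ℕ) (μ : Measure Ω) : Prop :=
  IndepFun N (fun ω (i : s) => f i.1 ω) μ

/-- The absolute rank `A_{t,k}` of `X t` among `X 1, …, X k`
(the largest observation has rank 1). -/
def absRank {Ω : Type*} (X : ℕ → Ω → ℝ) (t k : ℕ) (ω : Ω) : ℕ :=
  ((Finset.Icc 1 k).filter fun j => X t ω ≤ X j ω).card

/-- The relative rank `R_t = A_{t,t}`. -/
def relRank {Ω : Type*} (X : ℕ → Ω → ℝ) (t : ℕ) (ω : Ω) : ℕ := absRank X t t ω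

/-- `(X i)_{i ∈ s}` are i.i.d. with an atomless (continuous) common distribution. -/
def IIDContinuousOn {Ω : Type*} [MeasurableSpace Ω] (X : ℕ → Ω → ℝ) (s : Set ℕ)
    (μ : Measure Ω) : Prop :=
  (∀ i ∈ s, Measurable (X i)) ∧ IndepSeq X s μ ∧
  (∀ i ∈ s, ∀ j ∈ s, IdentDistrib (X i) (X j) μ μ) ∧
  (∀ i ∈ s, ∀ x : ℝ, μ {ω | X i ω = x} = 0)

/-!
Write `π t = ∏_{j=t}^n q_j`. Since `{τ = t}` is decided by `Z_1, …, Z_t`, a stopping time wins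
with probability `∑_t P(τ = t, Z_t = 1) π(t+1)`, and `{τ ≥ t}` is independent of `Z_t`; backward
induction then bounds this by `v 1` for any solution `v` of the Bellman recursion
`v t = p_t max(π(t+1), v(t+1)) + q_t v(t+1)`. Stopping at the first success from `t` on wins with
probability `W t = π t ∑_{j=t}^n r_j`. After the threshold `t*` the remaining odds sum to less than
one, so `W (t+1) ≤ π(t+1)` and stopping at a success is optimal; before it,
`π(t+1) ≤ π t* ≤ W t*` and waiting for `t*` is optimal. Hence `v t = W (max t t*)` solves the
recursion, and `τ*` attains `v 1 = W t*`.
-/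

section Filtration

variable {Ω β : Type*} [MeasurableSpace β] {f : ℕ → Ω → β}

theorem comap_le_genFilt {i t : ℕ} (h1 : 1 ≤ i) (h2 : i ≤ t) :
    MeasurableSpace.comap (f i) inferInstance ≤ genFilt f t :=
  le_iSup₂ (f := fun i (_ : i ∈ Set.Icc 1 t) => MeasurableSpace.comap (f i) inferInstance)
    i ⟨h1, h2⟩

theorem measurableSet_genFilt_preimage {i t : ℕ} (h1 : 1 ≤ i) (h2 : i ≤ t) {s : Set β}
    (hs : MeasurableSet s) : MeasurableSet[genFilt f t] (f i ⁻¹' s) :=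
  comap_le_genFilt h1 h2 _ ⟨s, hs, rfl⟩

theorem genFilt_mono : Monotone (genFilt f) := fun _ _ h =>
  iSup₂_le fun _ hi => comap_le_genFilt hi.1 (hi.2.trans h)

theorem genFilt_le [MeasurableSpace Ω] (hf : ∀ t, Measurable (f t)) (t : ℕ) :
    genFilt f t ≤ ‹MeasurableSpace Ω› :=
  iSup₂_le fun i _ => (hf i).comap_le

theorem IsStopTime.measurableSet_lt {n : ℕ} {τ : Ω → ℕ} (hτ : IsStopTime f n τ) (t : ℕ) :
    MeasurableSet[genFilt f t] {ω | t < τ ω} := by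
  have h : {ω | t < τ ω} = (⋃ s ∈ range (t + 1), τ ⁻¹' {s})ᶜ := by
    ext ω
    simpa [Nat.lt_succ_iff] using
      ⟨fun h s hs he => by omega, fun h => not_le.1 fun hle => h _ hle rfl⟩
  rw [h]
  exact (Finset.measurableSet_biUnion _ fun s hs =>
    genFilt_mono (Nat.lt_succ_iff.1 (mem_range.1 hs)) _ (hτ.2 s)).compl

theorem IsStopTime.preimage_Icc {n : ℕ} {τ : Ω → ℕ} (hτ : IsStopTime f n τ) (t : ℕ) :
    τ ⁻¹' ↑(Icc t n) = {ω | t ≤ τ ω} := by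
  ext ω; simp [(hτ.1 ω).2]

end Filtration

section Independence

variable {Ω β : Type*} [MeasurableSpace Ω] [MeasurableSpace β] {f : ℕ → Ω → β} {μ : Measure Ω}

theorem IndepSeq.measureReal_biInter_preimage {s : Set ℕ} (h : IndepSeq f s μ) {F : Finset ℕ}
    (hF : ↑F ⊆ s) {g : ℕ → Set β} (hg : ∀ j ∈ F, MeasurableSet (g j)) :
    μ.real (⋂ j ∈ F, f j ⁻¹' g j) = ∏ j ∈ F, μ.real (f j ⁻¹' g j) := by
  have hF' : (⋂ j ∈ F, f j ⁻¹' g j) = ⋂ i ∈ F.subtype (· ∈ s), f i.1 ⁻¹' g i.1 := by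
    ext ω
    simp only [Set.mem_iInter, mem_subtype]
    exact ⟨fun h i hi => h i.1 hi, fun h j hj => h ⟨j, hF hj⟩ hj⟩
  rw [hF', measureReal_def, h.meas_biInter fun i hi => ⟨g i.1, hg i.1 (mem_subtype.1 hi), rfl⟩,
    ENNReal.toReal_prod]
  exact (prod_subtype_eq_prod_filter (f := fun j => μ.real (f j ⁻¹' g j))).trans
    (by rw [filter_true_of_mem fun j hj => hF hj])

theorem IndepSeq.indep_genFilt (hf : ∀ t, Measurable (f t)) {n t : ℕ}
    (h : IndepSeq f (Set.Icc 1 n) μ) (ht : t ≤ n) :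
    Indep (genFilt f t) (⨆ j ∈ Set.Ioc t n, MeasurableSpace.comap (f j) inferInstance) μ := by
  let m : Set.Icc 1 n → MeasurableSpace Ω := fun i => MeasurableSpace.comap (f i.1) inferInstance
  have hpast : genFilt f t = ⨆ i ∈ {i : Set.Icc 1 n | i.1 ≤ t}, m i :=
    le_antisymm
      (iSup₂_le fun i hi => le_iSup₂ (f := fun i (_ : i ∈ {i : Set.Icc 1 n | i.1 ≤ t}) => m i)
        ⟨i, hi.1, hi.2.trans ht⟩ hi.2)
      (iSup₂_le fun i hi => comap_le_genFilt i.2.1 hi)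
  have hfuture : (⨆ j ∈ Set.Ioc t n, MeasurableSpace.comap (f j) inferInstance)
      = ⨆ i ∈ {i : Set.Icc 1 n | t < i.1}, m i :=
    le_antisymm
      (iSup₂_le fun j hj => le_iSup₂ (f := fun i (_ : i ∈ {i : Set.Icc 1 n | t < i.1}) => m i)
        ⟨j, Nat.one_le_of_lt hj.1, hj.2⟩ hj.1)
      (iSup₂_le fun i hi => le_iSup₂ (f := fun j (_ : j ∈ Set.Ioc t n) =>
        MeasurableSpace.comap (f j) inferInstance) i.1 ⟨hi, i.2.2⟩)
  rw [hpast, hfuture]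
  exact indep_iSup_of_disjoint (m := m) (fun i => (hf i.1).comap_le) h.iIndep
    (S := {i | i.1 ≤ t}) (T := {i | t < i.1})
    (Set.disjoint_left.2 fun i (hi : i.1 ≤ t) (hi' : t < i.1) => (not_lt.2 hi) hi')

theorem IndepSeq.measureReal_inter_biInter_preimage (hf : ∀ t, Measurable (f t)) {n t : ℕ}
    (h : IndepSeq f (Set.Icc 1 n) μ) (ht : t ≤ n) {A : Set Ω} (hA : MeasurableSet[genFilt f t] A)
    {F : Finset ℕ} (hF : ↑F ⊆ Set.Ioc t n) {g : ℕ → Set β} (hg : ∀ j ∈ F, MeasurableSet (g j)) :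
    μ.real (A ∩ ⋂ j ∈ F, f j ⁻¹' g j) = μ.real A * ∏ j ∈ F, μ.real (f j ⁻¹' g j) := by
  have hB : MeasurableSet[⨆ j ∈ Set.Ioc t n, MeasurableSpace.comap (f j) inferInstance]
      (⋂ j ∈ F, f j ⁻¹' g j) :=
    Finset.measurableSet_biInter _ fun j hj => le_iSup₂ (f := fun j (_ : j ∈ Set.Ioc t n) =>
      MeasurableSpace.comap (f j) inferInstance) j (hF hj) _ ⟨g j, hg j hj, rfl⟩
  rw [measureReal_def, (Indep_iff _ _ _).1 (h.indep_genFilt hf ht) _ _ hA hB, ENNReal.toReal_mul,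
    ← measureReal_def, ← measureReal_def,
    h.measureReal_biInter_preimage (hF.trans fun j hj => ⟨Nat.one_le_of_lt hj.1, hj.2⟩) hg]

end Independence

section StoppingBound

variable {Ω β : Type*} [MeasurableSpace Ω] [MeasurableSpace β] {f : ℕ → Ω → β} {μ : Measure Ω}
  [IsFiniteMeasure μ] {n : ℕ} {τ : Ω → ℕ}

theorem IsStopTime.measureReal_preimage_Icc (hf : ∀ t, Measurable (f t))
    (hτ : IsStopTime f n τ) (t : ℕ) :
    μ.real {ω | t ≤ τ ω} = ∑ s ∈ Icc t n, μ.real (τ ⁻¹' {s}) := by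
  rw [sum_measureReal_preimage_singleton _ fun s _ => genFilt_le hf s _ (hτ.2 s),
    hτ.preimage_Icc]

-- `{t ≤ τ}` is decided by `f 1, …, f (t - 1)`, hence independent of `f t`.
theorem IsStopTime.measureReal_inter_preimage_le (hf : ∀ t, Measurable (f t))
    (h : IndepSeq f (Set.Icc 1 n) μ) (hτ : IsStopTime f n τ) {t : ℕ} (ht : t ∈ Icc 1 n)
    {s : Set β} (hs : MeasurableSet s) :
    μ.real (τ ⁻¹' {t} ∩ f t ⁻¹' s) ≤ (∑ u ∈ Icc t n, μ.real (τ ⁻¹' {u})) * μ.real (f t ⁻¹' s) := by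
  obtain ⟨ht1, htn⟩ := mem_Icc.1 ht
  have hlt : {ω | t - 1 < τ ω} = {ω | t ≤ τ ω} := by ext ω; simp only [Set.mem_ofPred_eq]; omega
  calc μ.real (τ ⁻¹' {t} ∩ f t ⁻¹' s)
      ≤ μ.real ({ω | t - 1 < τ ω} ∩ ⋂ j ∈ ({t} : Finset ℕ), f j ⁻¹' s) := by
        refine measureReal_mono fun ω hω => ?_
        simp only [Set.mem_inter_iff, Set.mem_preimage, Set.mem_singleton_iff] at hω
        simp only [Set.mem_inter_iff, Set.mem_ofPred_eq, Finset.mem_singleton,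
          Set.iInter_iInter_eq_left, Set.mem_preimage]
        exact ⟨by omega, hω.2⟩
    _ = μ.real {ω | t - 1 < τ ω} * ∏ j ∈ ({t} : Finset ℕ), μ.real (f j ⁻¹' s) :=
        h.measureReal_inter_biInter_preimage hf (by omega) (hτ.measurableSet_lt _)
          (by simp only [coe_singleton, Set.singleton_subset_iff, Set.mem_Ioc]; omega)
          fun _ _ => hs
    _ = _ := by rw [prod_singleton, hlt, hτ.measureReal_preimage_Icc hf]

end StoppingBound

def stopsAtLastSuccess {Ω : Type*} (Z : ℕ → Ω → Bool) (n : ℕ) (τ : Ω → ℕ) : Set Ω :=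
  {ω | Z (τ ω) ω = true ∧ ∀ t, τ ω < t → t ≤ n → Z t ω = false}

theorem IsStopTime.stopsAtLastSuccess_eq {Ω : Type*} {n : ℕ} {Z : ℕ → Ω → Bool} {τ : Ω → ℕ}
    (hτ : IsStopTime Z n τ) :
    stopsAtLastSuccess Z n τ =
      ⋃ t ∈ Icc 1 n, τ ⁻¹' {t} ∩ Z t ⁻¹' {true} ∩ ⋂ j ∈ Ioc t n, Z j ⁻¹' {false} := by
  ext ω
  simp only [stopsAtLastSuccess, Set.mem_ofPred_eq, Set.mem_iUnion, Set.mem_inter_iff,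
    Set.mem_preimage, Set.mem_singleton_iff, Set.mem_iInter, mem_Icc, mem_Ioc, exists_prop]
  constructor
  · rintro ⟨hwin, hlast⟩
    exact ⟨τ ω, hτ.1 ω, ⟨rfl, hwin⟩, fun j hj => hlast j hj.1 hj.2⟩
  · rintro ⟨t, -, ⟨rfl, hwin⟩, hlast⟩
    exact ⟨hwin, fun j hj hjn => hlast j ⟨hj, hjn⟩⟩

section LastSuccess

variable {Ω : Type*} [MeasurableSpace Ω] {μ : Measure Ω} {n : ℕ} {Z : ℕ → Ω → Bool}

theorem measureReal_preimage_false [IsProbabilityMeasure μ] (hZ : ∀ t, Measurable (Z t))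
    (t : ℕ) : μ.real (Z t ⁻¹' {false}) = 1 - μ.real (Z t ⁻¹' {true}) := by
  have hfalse : Z t ⁻¹' {false} = (Z t ⁻¹' {true})ᶜ := by ext; simp
  rw [hfalse, probReal_compl_eq_one_sub (hZ t trivial)]

variable [IsFiniteMeasure μ] {τ : Ω → ℕ}

theorem IsStopTime.measureReal_stopsAtLastSuccess (hZ : ∀ t, Measurable (Z t))
    (h : IndepSeq Z (Set.Icc 1 n) μ) (hτ : IsStopTime Z n τ) :
    μ.real (stopsAtLastSuccess Z n τ) = ∑ t ∈ Icc 1 n,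
      μ.real (τ ⁻¹' {t} ∩ Z t ⁻¹' {true}) * ∏ j ∈ Ioc t n, μ.real (Z j ⁻¹' {false}) := by
  have hstop : ∀ t ∈ Icc 1 n, MeasurableSet[genFilt Z t] (τ ⁻¹' {t} ∩ Z t ⁻¹' {true}) :=
    fun t ht => (hτ.2 t).inter (measurableSet_genFilt_preimage (mem_Icc.1 ht).1 le_rfl trivial)
  rw [hτ.stopsAtLastSuccess_eq, measureReal_biUnion_finset]
  · refine sum_congr rfl fun t ht => ?_
    exact h.measureReal_inter_biInter_preimage hZ (mem_Icc.1 ht).2 (hstop t ht)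
      (by rw [coe_Ioc]) fun _ _ => trivial
  · exact (Set.pairwiseDisjoint_fiber τ _).mono fun t =>
      Set.inter_subset_left.trans Set.inter_subset_left
  · exact fun t ht => (genFilt_le hZ t _ (hstop t ht)).inter
      (Finset.measurableSet_biInter _ fun j _ => hZ j trivial)

end LastSuccess

-- Backward induction for the optimal stopping problem with `b t = P(τ = t)`,
-- `a t = P(τ = t, Z t = 1)` and reward `g t` for stopping at a success at time `t`.
theorem sum_mul_le_of_bellman {n : ℕ} {p g v a b : ℕ → ℝ} (m : ℕ)
    (hv : ∀ t ∈ Icc m n, v t = p t * max (g t) (v (t + 1)) + (1 - p t) * v (t + 1))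
    (hp : ∀ t ∈ Icc m n, 0 ≤ p t) (hg : ∀ t, 0 ≤ g t) (hv0 : ∀ t, 0 ≤ v t)
    (ha : ∀ t ∈ Icc m n, 0 ≤ a t) (hab : ∀ t ∈ Icc m n, a t ≤ b t)
    (hap : ∀ t ∈ Icc m n, a t ≤ (∑ s ∈ Icc t n, b s) * p t) :
    ∑ t ∈ Icc m n, a t * g t ≤ (∑ t ∈ Icc m n, b t) * v m := by
  rcases lt_or_ge n m with hnm | hmn
  · simp [Icc_eq_empty_of_lt hnm]
  have hsub : Icc (m + 1) n ⊆ Icc m n := Icc_subset_Icc_left m.le_succ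
  have ih := sum_mul_le_of_bellman (m + 1) (fun t ht => hv t (hsub ht))
    (fun t ht => hp t (hsub ht)) hg hv0 (fun t ht => ha t (hsub ht))
    (fun t ht => hab t (hsub ht)) (fun t ht => hap t (hsub ht))
  have hm : m ∈ Icc m n := mem_Icc.2 ⟨le_rfl, hmn⟩
  have hB : 0 ≤ ∑ t ∈ Icc (m + 1) n, b t :=
    sum_nonneg fun t ht => (ha t (hsub ht)).trans (hab t (hsub ht))
  have hapm := hap m hm
  rw [← add_sum_Ioc_eq_sum_Icc hmn, ← Icc_add_one_left_eq_Ioc] at hapm ⊢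
  rw [← add_sum_Ioc_eq_sum_Icc hmn, ← Icc_add_one_left_eq_Ioc, hv m hm]
  have := hab m hm
  rcases le_total (g m) (v (m + 1)) with hc | hc
  · rw [max_eq_right hc]
    nlinarith [mul_nonneg (ha m hm) (sub_nonneg.2 hc), mul_nonneg (sub_nonneg.2 this) (hv0 (m + 1))]
  · rw [max_eq_left hc]
    nlinarith [mul_nonneg (sub_nonneg.2 hapm) (sub_nonneg.2 hc),
      mul_nonneg (sub_nonneg.2 this) (hv0 (m + 1)), hp m hm, hg m]
termination_by n + 1 - m

-- The winning probability of stopping at the first success in `[t, n]`.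
def oddsValue (q r : ℕ → ℝ) (n t : ℕ) : ℝ := (∏ j ∈ Icc t n, q j) * ∑ j ∈ Icc t n, r j

def oddsThreshold (r : ℕ → ℝ) (n : ℕ) : ℕ :=
  max 1 (Nat.findGreatest (fun k => 1 ≤ ∑ j ∈ Icc k n, r j) n)

section OddsThreshold

variable {r : ℕ → ℝ} {n : ℕ}

theorem one_le_oddsThreshold : 1 ≤ oddsThreshold r n := le_max_left _ _

theorem oddsThreshold_le (hn : 1 ≤ n) : oddsThreshold r n ≤ n :=
  max_le hn (Nat.findGreatest_le n)

theorem sum_lt_one_of_oddsThreshold_lt {t : ℕ} (ht : oddsThreshold r n < t) :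
    ∑ j ∈ Icc t n, r j < 1 := by
  rcases le_or_gt t n with htn | hnt
  · exact not_le.1 (Nat.findGreatest_is_greatest (lt_of_le_of_lt (le_max_right _ _) ht) htn)
  · simp [Icc_eq_empty_of_lt hnt]

theorem one_le_sum_oddsThreshold (h : 1 < oddsThreshold r n) :
    1 ≤ ∑ j ∈ Icc (oddsThreshold r n) n, r j := by
  have h' : oddsThreshold r n = Nat.findGreatest (fun k => 1 ≤ ∑ j ∈ Icc k n, r j) n :=
    max_eq_right ((lt_max_iff.1 h).resolve_left (lt_irrefl 1)).le
  exact Nat.findGreatest_of_ne_zero h'.symm (by omega)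

end OddsThreshold

section OddsValue

variable {p q r : ℕ → ℝ} {n : ℕ}

theorem oddsValue_nonneg (hq : ∀ j ∈ Icc 1 n, 0 ≤ q j) (hr : ∀ j ∈ Icc 1 n, 0 ≤ r j)
    {t : ℕ} (ht : 1 ≤ t) : 0 ≤ oddsValue q r n t := by
  have hsub : Icc t n ⊆ Icc 1 n := Icc_subset_Icc_left ht
  exact mul_nonneg (prod_nonneg fun j hj => hq j (hsub hj)) (sum_nonneg fun j hj => hr j (hsub hj))

theorem oddsValue_eq_add {t : ℕ} (ht : t ≤ n) (hqr : q t * r t = p t) :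
    oddsValue q r n t = p t * ∏ j ∈ Ioc t n, q j + q t * oddsValue q r n (t + 1) := by
  rw [oddsValue, oddsValue, ← mul_prod_Ioc_eq_prod_Icc ht, ← add_sum_Ioc_eq_sum_Icc ht,
    Icc_add_one_left_eq_Ioc, ← hqr]
  ring

theorem oddsValue_le_prod {t : ℕ} (hq : ∀ j ∈ Icc t n, 0 ≤ q j) (hr : ∑ j ∈ Icc t n, r j ≤ 1) :
    oddsValue q r n t ≤ ∏ j ∈ Icc t n, q j :=
  mul_le_of_le_one_right (prod_nonneg hq) hr

theorem prod_Icc_le_prod_Icc_of_le_one {s t : ℕ} (hst : s ≤ t) (hq0 : ∀ j ∈ Icc s n, 0 ≤ q j)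
    (hq1 : ∀ j ∈ Icc s n, q j ≤ 1) : ∏ j ∈ Icc s n, q j ≤ ∏ j ∈ Icc t n, q j :=
  prod_le_prod_of_subset_of_le_one (Icc_subset_Icc_left hst) hq0 fun j hj _ => hq1 j hj

theorem oddsValue_max_oddsThreshold_eq (hq : ∀ t ∈ Icc 1 n, q t = 1 - p t)
    (hqr : ∀ t ∈ Icc 1 n, q t * r t = p t) (hq0 : ∀ t ∈ Icc 1 n, 0 ≤ q t)
    (hr0 : ∀ t ∈ Icc 1 n, 0 ≤ r t) {t : ℕ} (ht : t ∈ Icc 1 n) :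
    oddsValue q r n (max t (oddsThreshold r n)) =
      p t * max (∏ j ∈ Ioc t n, q j) (oddsValue q r n (max (t + 1) (oddsThreshold r n)))
        + (1 - p t) * oddsValue q r n (max (t + 1) (oddsThreshold r n)) := by
  obtain ⟨ht1, htn⟩ := mem_Icc.1 ht
  set θ := oddsThreshold r n
  rcases le_or_gt θ t with hle | hlt
  · -- past the threshold, stopping at a success beats continuing
    have hstop : oddsValue q r n (t + 1) ≤ ∏ j ∈ Ioc t n, q j := by
      rw [← Icc_add_one_left_eq_Ioc]
      exact oddsValue_le_prod (fun j hj => hq0 j (Icc_subset_Icc_left (by omega) hj))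
        (sum_lt_one_of_oddsThreshold_lt (by omega)).le
    rw [max_eq_left hle, max_eq_left (show θ ≤ t + 1 by omega), max_eq_left hstop, ← hq t ht,
      oddsValue_eq_add htn (hqr t ht)]
  · -- before the threshold, continuing beats stopping
    have hq1 : ∀ j ∈ Icc 1 n, q j ≤ 1 := fun j hj => by
      rw [hq j hj]; nlinarith [hqr j hj, mul_nonneg (hq0 j hj) (hr0 j hj)]
    have hθ : Icc θ n ⊆ Icc 1 n := Icc_subset_Icc_left one_le_oddsThreshold
    have hcont : ∏ j ∈ Ioc t n, q j ≤ oddsValue q r n θ :=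
      calc ∏ j ∈ Ioc t n, q j ≤ ∏ j ∈ Icc θ n, q j := by
            rw [← Icc_add_one_left_eq_Ioc]
            exact prod_Icc_le_prod_Icc_of_le_one hlt
              (fun j hj => hq0 j (Icc_subset_Icc_left (by omega) hj))
              (fun j hj => hq1 j (Icc_subset_Icc_left (by omega) hj))
        _ ≤ oddsValue q r n θ :=
            le_mul_of_one_le_right (prod_nonneg fun j hj => hq0 j (hθ hj))
              (one_le_sum_oddsThreshold (by omega))
    rw [max_eq_right hlt.le, max_eq_right (show t + 1 ≤ θ by omega), max_eq_right hcont]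
    ring

end OddsValue

section Optimality

variable {Ω : Type*} [MeasurableSpace Ω] {μ : Measure Ω} [IsProbabilityMeasure μ] {n : ℕ}
  {Z : ℕ → Ω → Bool} {p q r : ℕ → ℝ}

theorem IsStopTime.measureReal_stopsAtLastSuccess_le (hZ : ∀ t, Measurable (Z t))
    (h : IndepSeq Z (Set.Icc 1 n) μ) {τ : Ω → ℕ} (hτ : IsStopTime Z n τ)
    (hp : ∀ t, p t = μ.real (Z t ⁻¹' {true})) (hq : ∀ t, q t = μ.real (Z t ⁻¹' {false}))
    (hqr : ∀ t ∈ Icc 1 n, q t * r t = p t) (hr0 : ∀ t ∈ Icc 1 n, 0 ≤ r t) :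
    μ.real (stopsAtLastSuccess Z n τ) ≤ oddsValue q r n (oddsThreshold r n) := by
  have hq0 : ∀ t, 0 ≤ q t := fun t => hq t ▸ measureReal_nonneg
  have hpq : ∀ t, q t = 1 - p t := fun t => by rw [hq, hp, measureReal_preimage_false hZ]
  have hbell := sum_mul_le_of_bellman (g := fun t => ∏ j ∈ Ioc t n, q j)
    (v := fun t => oddsValue q r n (max t (oddsThreshold r n)))
    (a := fun t => μ.real (τ ⁻¹' {t} ∩ Z t ⁻¹' {true})) (b := fun t => μ.real (τ ⁻¹' {t})) 1
    (fun t ht => oddsValue_max_oddsThreshold_eq (fun t _ => hpq t) hqr (fun t _ => hq0 t) hr0 ht)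
    (fun t ht => hp t ▸ measureReal_nonneg) (fun t => prod_nonneg fun j _ => hq0 j)
    (fun t => oddsValue_nonneg (fun j _ => hq0 j) hr0
      (one_le_oddsThreshold.trans (le_max_right _ _)))
    (fun t _ => measureReal_nonneg) (fun t _ => measureReal_mono Set.inter_subset_left)
    (fun t ht => hp t ▸ hτ.measureReal_inter_preimage_le hZ h ht trivial)
  have hone : ∑ t ∈ Icc 1 n, μ.real (τ ⁻¹' {t}) = 1 := by
    rw [← hτ.measureReal_preimage_Icc hZ,
      Set.eq_univ_of_forall (s := {ω | 1 ≤ τ ω}) fun ω => (hτ.1 ω).1, probReal_univ]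
  rw [hτ.measureReal_stopsAtLastSuccess hZ h]
  simp only [← hq]
  simpa [hone, max_eq_right one_le_oddsThreshold] using hbell

end Optimality

theorem sInf_firstHit_eq_iff {P : ℕ → Prop} {a n t : ℕ} (han : a ≤ n) :
    sInf ({j | j ∈ Set.Icc a n ∧ P j} ∪ {n}) = t ↔
      t ∈ Set.Icc a n ∧ (∀ j ∈ Set.Ico a t, ¬P j) ∧ (P t ∨ t = n) := by
  set S := {j | j ∈ Set.Icc a n ∧ P j} ∪ {n}
  have hS : sInf S = t ↔ IsLeast S t :=
    ⟨fun h => h ▸ ⟨Nat.sInf_mem ⟨n, Or.inr rfl⟩, fun j hj => Nat.sInf_le hj⟩,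
      fun h => h.csInf_eq⟩
  rw [hS, IsLeast, mem_lowerBounds]
  simp only [S, Set.mem_union, Set.mem_ofPred_eq, Set.mem_Icc, Set.mem_singleton_iff, Set.mem_Ico]
  constructor
  · rintro ⟨ht, hle⟩
    refine ⟨?_, fun j hj hP => ?_, ht.imp_left And.right⟩
    · have := hle n (Or.inr rfl); omega
    · have := hle j (Or.inl ⟨⟨hj.1, by omega⟩, hP⟩); omega
  · rintro ⟨ht, hnot, hP⟩
    refine ⟨hP.imp_left fun h => ⟨ht, h⟩, ?_⟩
    rintro j (⟨hj, hPj⟩ | rfl)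
    · by_contra hlt
      exact hnot j ⟨hj.1, by omega⟩ hPj
    · exact ht.2

theorem prod_Icc_eq_prod_Ico_mul_prod_Ioc {M : Type*} [CommMonoid M] (f : ℕ → M) {a t n : ℕ}
    (hat : a ≤ t) (htn : t ≤ n) :
    ∏ j ∈ Icc a n, f j = (∏ j ∈ Ico a t, f j) * (f t * ∏ j ∈ Ioc t n, f j) := by
  rw [mul_prod_Ioc_eq_prod_Icc htn, ← Ico_add_one_right_eq_Icc, ← Ico_add_one_right_eq_Icc,
    prod_Ico_consecutive _ hat (by omega)]

section FirstSuccess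

variable {Ω : Type*} {n a : ℕ} {Z : ℕ → Ω → Bool} {τ : Ω → ℕ}

theorem firstSuccess_eq_iff (han : a ≤ n)
    (hτ : ∀ ω, τ ω = sInf ({t | t ∈ Set.Icc a n ∧ Z t ω = true} ∪ {n})) {ω : Ω} {t : ℕ} :
    τ ω = t ↔ t ∈ Set.Icc a n ∧ (∀ j ∈ Set.Ico a t, Z j ω = false) ∧ (Z t ω = true ∨ t = n) := by
  simp only [hτ, sInf_firstHit_eq_iff han, Bool.not_eq_true]

theorem firstSuccess_mem_Icc (han : a ≤ n)
    (hτ : ∀ ω, τ ω = sInf ({t | t ∈ Set.Icc a n ∧ Z t ω = true} ∪ {n})) (ω : Ω) :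
    τ ω ∈ Set.Icc a n :=
  ((firstSuccess_eq_iff han hτ).1 rfl).1

theorem preimage_firstSuccess (han : a ≤ n)
    (hτ : ∀ ω, τ ω = sInf ({t | t ∈ Set.Icc a n ∧ Z t ω = true} ∪ {n})) {t : ℕ}
    (ht : t ∈ Icc a n) :
    τ ⁻¹' {t} = (⋂ j ∈ Ico a t, Z j ⁻¹' {false}) ∩ (Z t ⁻¹' {true} ∪ {_ω | t = n}) := by
  have ht' : t ∈ Set.Icc a n := Set.mem_Icc.2 (mem_Icc.1 ht)
  ext ω
  simp only [Set.mem_preimage, Set.mem_singleton_iff, firstSuccess_eq_iff han hτ, ht', true_and,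
    Set.mem_inter_iff, Set.mem_iInter, Set.mem_union, Set.mem_ofPred_eq, mem_Ico, Set.mem_Ico]

theorem preimage_firstSuccess_inter_success (han : a ≤ n)
    (hτ : ∀ ω, τ ω = sInf ({t | t ∈ Set.Icc a n ∧ Z t ω = true} ∪ {n})) {t : ℕ}
    (ht : t ∈ Icc a n) :
    τ ⁻¹' {t} ∩ Z t ⁻¹' {true} = ⋂ j ∈ Icc a t, Z j ⁻¹' {decide (j = t)} := by
  rw [preimage_firstSuccess han hτ ht, ← Ico_insert_right (mem_Icc.1 ht).1, set_biInter_insert]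
  ext ω
  simp only [Set.mem_inter_iff, Set.mem_iInter, Set.mem_union, Set.mem_preimage,
    Set.mem_singleton_iff, decide_true, mem_Ico]
  constructor
  · rintro ⟨⟨hbefore, -⟩, hsucc⟩
    exact ⟨hsucc, fun j hj => by rw [hbefore j hj, decide_eq_false (by omega)]⟩
  · rintro ⟨hsucc, hbefore⟩
    exact ⟨⟨fun j hj => by rw [hbefore j hj, decide_eq_false (by omega)], Or.inl hsucc⟩, hsucc⟩

theorem isStopTime_firstSuccess (ha : 1 ≤ a) (han : a ≤ n)
    (hτ : ∀ ω, τ ω = sInf ({t | t ∈ Set.Icc a n ∧ Z t ω = true} ∪ {n})) :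
    IsStopTime Z n τ := by
  refine ⟨fun ω => Set.Icc_subset_Icc_left ha (firstSuccess_mem_Icc han hτ ω), fun t => ?_⟩
  show MeasurableSet[genFilt Z t] (τ ⁻¹' {t})
  by_cases ht : t ∈ Icc a n
  · obtain ⟨hat, htn⟩ := mem_Icc.1 ht
    rw [preimage_firstSuccess han hτ ht]
    refine .inter (Finset.measurableSet_biInter _ fun j hj => ?_)
      ((measurableSet_genFilt_preimage (s := {true}) (ha.trans hat) le_rfl trivial).union
        (.const _))
    obtain ⟨haj, hjt⟩ := mem_Ico.1 hj
    exact measurableSet_genFilt_preimage (ha.trans haj) hjt.le trivial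
  · convert MeasurableSet.empty
    exact Set.eq_empty_of_forall_notMem fun ω hω =>
      ht (mem_Icc.2 (hω ▸ firstSuccess_mem_Icc han hτ ω))

end FirstSuccess

theorem measureReal_stopsAtLastSuccess_firstSuccess {Ω : Type*} [MeasurableSpace Ω]
    {μ : Measure Ω} [IsFiniteMeasure μ] {n a : ℕ} {Z : ℕ → Ω → Bool} {τ : Ω → ℕ}
    {p q r : ℕ → ℝ} (hZ : ∀ t, Measurable (Z t)) (h : IndepSeq Z (Set.Icc 1 n) μ)
    (hp : ∀ t, p t = μ.real (Z t ⁻¹' {true})) (hq : ∀ t, q t = μ.real (Z t ⁻¹' {false}))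
    (hqr : ∀ t ∈ Icc 1 n, q t * r t = p t) (ha : 1 ≤ a) (han : a ≤ n)
    (hτ : ∀ ω, τ ω = sInf ({t | t ∈ Set.Icc a n ∧ Z t ω = true} ∪ {n})) :
    μ.real (stopsAtLastSuccess Z n τ) = oddsValue q r n a := by
  rw [(isStopTime_firstSuccess ha han hτ).measureReal_stopsAtLastSuccess hZ h, oddsValue, mul_sum,
    ← sum_subset (Icc_subset_Icc_left ha) fun t _ ht => ?_]
  · refine sum_congr rfl fun t ht => ?_
    obtain ⟨hat, htn⟩ := mem_Icc.1 ht
    have hsub : ↑(Icc a t) ⊆ Set.Icc 1 n := fun j hj => by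
      simp only [coe_Icc, Set.mem_Icc] at hj ⊢; omega
    rw [preimage_firstSuccess_inter_success han hτ ht,
      h.measureReal_biInter_preimage hsub fun _ _ => trivial, ← prod_Ico_mul_eq_prod_Icc hat,
      prod_Icc_eq_prod_Ico_mul_prod_Ioc q hat htn, decide_eq_true (rfl : t = t), ← hp,
      ← hqr t (mem_Icc.2 ⟨by omega, htn⟩)]
    simp only [← hq]
    rw [prod_congr rfl fun j hj => by rw [decide_eq_false (by simp at hj; omega), ← hq]]
    ring
  · have hempty : τ ⁻¹' {t} = ∅ := Set.eq_empty_of_forall_notMem fun ω hω =>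
      ht (mem_Icc.2 (hω ▸ firstSuccess_mem_Icc han hτ ω))
    simp [hempty]

/-- Bruss' Odds-Theorem: with odds `r_t = p_t/q_t` and
`t* = max{1, max{k ∈ {1,…,n} : ∑_{j=k}^n r_j ≥ 1}}`, the rule
`τ* = min({t ≥ t* : Z_t = 1} ∪ {n})` maximizes the probability of stopping at the last
success over all stopping times of the natural filtration of `Z`, and the maximal
probability equals `(∏_{j=t*}^n q_j)(∑_{j=t*}^n r_j)`. -/
theorem stmt_18 {Ω : Type*} [MeasurableSpace Ω] (μ : Measure Ω) [IsProbabilityMeasure μ]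
    (n : ℕ) (hn : 1 ≤ n)
    (Z : ℕ → Ω → Bool) (hZmeas : ∀ t, Measurable (Z t))
    (hZindep : IndepSeq Z (Set.Icc 1 n) μ)
    (p q r : ℕ → ℝ)
    (hp : ∀ t, p t = (μ {ω | Z t ω = true}).toReal)
    (hp1 : ∀ t ∈ Set.Icc 1 n, p t < 1)
    (hq : ∀ t, q t = 1 - p t)
    (hr : ∀ t, r t = p t / q t)
    (tstar : ℕ)
    (htstar : tstar = max 1 (Nat.findGreatest (fun k => 1 ≤ ∑ j ∈ Finset.Icc k n, r j) n))
    (τstar : Ω → ℕ)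
    (hτstar : ∀ ω, τstar ω = sInf ({t | t ∈ Set.Icc tstar n ∧ Z t ω = true} ∪ {n})) :
    IsGreatest {x : ℝ | ∃ τ : Ω → ℕ, IsStopTime Z n τ ∧
        x = (μ {ω | Z (τ ω) ω = true ∧
              ∀ t, τ ω < t → t ≤ n → Z t ω = false}).toReal}
      ((μ {ω | Z (τstar ω) ω = true ∧
            ∀ t, τstar ω < t → t ≤ n → Z t ω = false}).toReal) ∧
    (μ {ω | Z (τstar ω) ω = true ∧ ∀ t, τstar ω < t → t ≤ n → Z t ω = false}).toReal
      = (∏ j ∈ Finset.Icc tstar n, q j) * ∑ j ∈ Finset.Icc tstar n, r j := by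
  have hpZ : ∀ t, p t = μ.real (Z t ⁻¹' {true}) := hp
  have hqZ : ∀ t, q t = μ.real (Z t ⁻¹' {false}) := fun t => by
    rw [hq, hpZ, measureReal_preimage_false hZmeas]
  have hq0 : ∀ t ∈ Icc 1 n, 0 < q t := fun t ht => by
    rw [hq]; linarith [hp1 t (Set.mem_Icc.2 (mem_Icc.1 ht))]
  have hqr : ∀ t ∈ Icc 1 n, q t * r t = p t := fun t ht => by
    rw [hr, mul_div_cancel₀ _ (hq0 t ht).ne']
  have hr0 : ∀ t ∈ Icc 1 n, 0 ≤ r t := fun t ht =>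
    hr t ▸ div_nonneg (hpZ t ▸ measureReal_nonneg) (hq0 t ht).le
  have hts1 : 1 ≤ tstar := htstar ▸ one_le_oddsThreshold
  have htsn : tstar ≤ n := htstar ▸ oddsThreshold_le hn
  have hval : μ.real (stopsAtLastSuccess Z n τstar) = oddsValue q r n tstar :=
    measureReal_stopsAtLastSuccess_firstSuccess hZmeas hZindep hpZ hqZ hqr hts1 htsn hτstar
  refine ⟨⟨⟨τstar, isStopTime_firstSuccess hts1 htsn hτstar, rfl⟩, ?_⟩, hval⟩
  rintro _ ⟨τ, hτ, rfl⟩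
  change μ.real (stopsAtLastSuccess Z n τ) ≤ μ.real (stopsAtLastSuccess Z n τstar)
  rw [hval, htstar]
  exact hτ.measureReal_stopsAtLastSuccess_le hZmeas hZindep hpZ hqZ hqr hr0
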